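/- arXiv:cond-mat/0002244 — 4 statements merged into one kernel-verified Lean document; each statement's English description precedes it below -/
import Mathlib

section
/- For every n ∈ ℤ, the function t ↦ G(n,t) is twice differentiable on ℝ, G(n,0) = 0, and G satisfies the linear lattice wave equation ∂ₜ²G(n,t) = G(n+1,t) + G(n−1,t) − 2G(n,t) for all n ∈ ℤ and t ∈ ℝ. -/
open Set Filter

/-- Lattice Green function `G₁(n,t) = (2/π) ∫_{-π}^{π} cos(2σn) sin(2t sin σ) sin σ dσ`. -/
noncomputable def G1fun (n : ℤ) (t : ℝ) : ℝ :=
  (2 / Real.pi) * ∫ σ in (-Real.pi)..Real.pi,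
    Real.cos (2 * σ * (n : ℝ)) * Real.sin (2 * t * Real.sin σ) * Real.sin σ

/-- Lattice Green function `G(n,t) = (2/π) ∫_{-π}^{π} cos(2σn) sin(2t sin σ)/sin σ dσ`,
with the integrand extended by its limiting value `2t cos(2σn)` where `sin σ = 0`. -/
noncomputable def Gfun (n : ℤ) (t : ℝ) : ℝ :=
  (2 / Real.pi) * ∫ σ in (-Real.pi)..Real.pi,
    if Real.sin σ = 0 then 2 * t * Real.cos (2 * σ * (n : ℝ))
    else Real.cos (2 * σ * (n : ℝ)) * Real.sin (2 * t * Real.sin σ) / Real.sin σ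

/-- Discrete Laplacian `Δf_n = f_{n+1} + f_{n-1} - 2 f_n`. -/
noncomputable def lap (f : ℤ → ℝ) (n : ℤ) : ℝ := f (n + 1) + f (n - 1) - 2 * f n

/-- The tail sum `Σ_{m ≤ n-1} f_m`. -/
noncomputable def tailSum (f : ℤ → ℝ) (n : ℤ) : ℝ := ∑' m : {m : ℤ // m ≤ n - 1}, f m.1

/-- Convergence of the tail series `Σ_{m ≤ n-1} f_m`. -/
def TailSummable (f : ℤ → ℝ) (n : ℤ) : Prop :=
  Summable (fun m : {m : ℤ // m ≤ n - 1} => f m.1)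

/-- The family `α` (with time derivatives taken within `s`) has finite energy norm on `[0,T)`:
`sup_{0≤t<T} [ Σ_n (Σ_{m≤n-1} α̇_m(t))² + Σ_n α_n(t)² ] < ∞`
(in particular all the series involved converge). -/
def FiniteEnergyOn (α : ℤ → ℝ → ℝ) (s : Set ℝ) (T : ℝ) : Prop :=
  (∀ n : ℤ, ∀ t ∈ Ico (0 : ℝ) T, TailSummable (fun m => derivWithin (α m) s t) n) ∧
  ∃ M : ℝ, ∀ t ∈ Ico (0 : ℝ) T,
    Summable (fun n : ℤ => (tailSum (fun m => derivWithin (α m) s t) n) ^ 2) ∧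
    Summable (fun n : ℤ => (α n t) ^ 2) ∧
    (∑' n : ℤ, (tailSum (fun m => derivWithin (α m) s t) n) ^ 2)
      + (∑' n : ℤ, (α n t) ^ 2) ≤ M

/-- `α` solves the FPU lattice equation `α̈_n = Δα_n + χ Δ(α_n^p)` on `s`. -/
def SolvesFPU (p : ℕ) (χ : ℝ) (α : ℤ → ℝ → ℝ) (s : Set ℝ) : Prop :=
  ∀ n : ℤ, ∀ t ∈ s,
    derivWithin (derivWithin (α n) s) s t
      = lap (fun m => α m t) n + χ * lap (fun m => (α m t) ^ p) n

/-- `α` solves the sine-Gordon lattice equation `α̈_n = Δα_n + χ Δ(sin α_n)` on `s`. -/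
def SolvesSG (χ : ℝ) (α : ℤ → ℝ → ℝ) (s : Set ℝ) : Prop :=
  ∀ n : ℤ, ∀ t ∈ s,
    derivWithin (derivWithin (α n) s) s t
      = lap (fun m => α m t) n + χ * lap (fun m => Real.sin (α m t)) n

/-- `u` solves the on-site lattice equation `ü_n = Δu_n - χ u_n^p` on `s`. -/
def SolvesOnSite (p : ℕ) (χ : ℝ) (u : ℤ → ℝ → ℝ) (s : Set ℝ) : Prop :=
  ∀ n : ℤ, ∀ t ∈ s,
    derivWithin (derivWithin (u n) s) s t = lap (fun m => u m t) n - χ * (u n t) ^ p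

/-- On-site energy norm finiteness: `sup_{0≤t<T} Σ_n [u̇_n(t)² + u_n(t)²] < ∞`. -/
def OnSiteFiniteEnergy (u : ℤ → ℝ → ℝ) (s : Set ℝ) (T : ℝ) : Prop :=
  ∃ M : ℝ, ∀ t ∈ Ico (0 : ℝ) T,
    Summable (fun n : ℤ => (derivWithin (u n) s t) ^ 2 + (u n t) ^ 2) ∧
    (∑' n : ℤ, ((derivWithin (u n) s t) ^ 2 + (u n t) ^ 2)) ≤ M

/-!
Write the integrand of `G(n, t)` as `cos (2σn) · sin (2t sin σ) / sin σ`. Differentiating twice in `t`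
under the integral multiplies it by `-4 sin² σ`, and so does the discrete Laplacian in `n`, because
`cos (x + 2σ) + cos (x - 2σ) - 2 cos x = -4 sin² σ cos x`.
-/

open MeasureTheory Real
open scoped Interval

theorem intervalIntegral.hasDerivAt_integral_of_forall_hasDerivAt_of_norm_le
    {E : Type*} [NormedAddCommGroup E] [NormedSpace ℝ E] {μ : Measure ℝ}
    [IsLocallyFiniteMeasure μ] {F F' : ℝ → ℝ → E} {a b C t : ℝ}
    (hF_meas : ∀ x, AEStronglyMeasurable (F x) (μ.restrict (Ι a b)))
    (hF_int : IntervalIntegrable (F t) μ a b)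
    (hF'_meas : AEStronglyMeasurable (F' t) (μ.restrict (Ι a b)))
    (h_bound : ∀ x σ, ‖F' x σ‖ ≤ C)
    (h_diff : ∀ x σ, HasDerivAt (F · σ) (F' x σ) x) :
    HasDerivAt (fun x => ∫ σ in a..b, F x σ ∂μ) (∫ σ in a..b, F' t σ ∂μ) t :=
  (hasDerivAt_integral_of_dominated_loc_of_deriv_le univ_mem (.of_forall hF_meas) hF_int
    hF'_meas (.of_forall fun σ _ x _ => h_bound x σ) intervalIntegrable_const
    (.of_forall fun σ _ x _ => h_diff x σ)).2

theorem Real.cos_add_add_cos_sub_sub_two_mul_cos (x y : ℝ) :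
    cos (x + 2 * y) + cos (x - 2 * y) - 2 * cos x = -4 * sin y ^ 2 * cos x := by
  rw [cos_add, cos_sub, cos_two_mul, cos_sq']
  ring

noncomputable def sinMulDiv (s t : ℝ) : ℝ := if s = 0 then t else sin (s * t) / s

theorem mul_sinMulDiv (s t : ℝ) : s * sinMulDiv s t = sin (s * t) := by
  unfold sinMulDiv
  split_ifs with hs
  · simp [hs]
  · field_simp

theorem abs_sinMulDiv_le (s t : ℝ) : |sinMulDiv s t| ≤ |t| := by
  unfold sinMulDiv
  split_ifs with hs
  · rfl
  · rw [abs_div, div_le_iff₀ (abs_pos.mpr hs), ← abs_mul, mul_comm t]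
    exact abs_sin_le_abs

@[fun_prop]
theorem measurable_sinMulDiv_left (t : ℝ) : Measurable fun s => sinMulDiv s t :=
  Measurable.ite (measurableSet_singleton 0) measurable_const (by fun_prop)

theorem hasDerivAt_sinMulDiv (s t : ℝ) : HasDerivAt (sinMulDiv s) (cos (s * t)) t := by
  by_cases hs : s = 0
  · have h : sinMulDiv s = id := funext fun t => if_pos hs
    rw [h, hs, zero_mul, cos_zero]
    exact hasDerivAt_id t
  · have h : sinMulDiv s = fun t => sin (s * t) / s := funext fun t => if_neg hs
    rw [h]
    exact (((hasDerivAt_id t).const_mul s).sin.div_const s).congr_deriv (by simp [hs])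

section Green

variable (n : ℤ)

noncomputable def greenKernel (t σ : ℝ) : ℝ := cos (2 * σ * n) * sinMulDiv (sin σ) (2 * t)

theorem Gfun_eq_integral_greenKernel (t : ℝ) :
    Gfun n t = 2 / π * ∫ σ in -π..π, greenKernel n t σ := by
  unfold Gfun greenKernel sinMulDiv
  congr 1
  refine intervalIntegral.integral_congr fun σ _ => ?_
  split_ifs <;> ring_nf

theorem measurable_greenKernel (t : ℝ) : Measurable (greenKernel n t) := by
  unfold greenKernel
  fun_prop

theorem Gfun_apply_zero : Gfun n 0 = 0 := by
  simp [Gfun_eq_integral_greenKernel, greenKernel, sinMulDiv]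

theorem intervalIntegrable_greenKernel (t a b : ℝ) :
    IntervalIntegrable (greenKernel n t) volume a b := by
  refine IntervalIntegrable.mono_fun' (g := fun _ => |2 * t|) intervalIntegrable_const
    (measurable_greenKernel n t).aestronglyMeasurable (.of_forall fun σ => ?_)
  show ‖greenKernel n t σ‖ ≤ |2 * t|
  rw [greenKernel, norm_mul, Real.norm_eq_abs, Real.norm_eq_abs]
  exact (mul_le_of_le_one_left (abs_nonneg _) (abs_cos_le_one _)).trans (abs_sinMulDiv_le _ _)

theorem hasDerivAt_greenKernel (σ t : ℝ) :
    HasDerivAt (greenKernel n · σ) (2 * cos (2 * σ * n) * cos (sin σ * (2 * t))) t := by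
  have h := (hasDerivAt_sinMulDiv (sin σ) (2 * t)).comp t ((hasDerivAt_id t).const_mul 2)
  exact (h.const_mul (cos (2 * σ * n))).congr_deriv (by ring)

theorem hasDerivAt_greenKernel_deriv (σ t : ℝ) :
    HasDerivAt (fun t => 2 * cos (2 * σ * n) * cos (sin σ * (2 * t)))
      (-4 * sin σ * (cos (2 * σ * n) * sin (sin σ * (2 * t)))) t := by
  have h := ((hasDerivAt_id t).const_mul 2).const_mul (sin σ) |>.cos
  exact (h.const_mul (2 * cos (2 * σ * n))).congr_deriv (by simp only [id]; ring)

theorem lap_greenKernel (t σ : ℝ) :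
    lap (fun m => greenKernel m t σ) n = -4 * sin σ ^ 2 * greenKernel n t σ := by
  have h := cos_add_add_cos_sub_sub_two_mul_cos (2 * σ * n) σ
  simp only [lap, greenKernel]
  push_cast
  rw [show 2 * σ * (n + 1) = 2 * σ * n + 2 * σ by ring,
    show 2 * σ * (n - 1) = 2 * σ * n - 2 * σ by ring]
  linear_combination sinMulDiv (sin σ) (2 * t) * h

theorem lap_Gfun (t : ℝ) :
    lap (fun m => Gfun m t) n = 2 / π * ∫ σ in -π..π, -4 * sin σ ^ 2 * greenKernel n t σ := by
  have hI := fun m : ℤ => intervalIntegrable_greenKernel m t (-π) π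
  calc lap (fun m => Gfun m t) n
      = 2 / π * ((∫ σ in -π..π, greenKernel (n + 1) t σ) + (∫ σ in -π..π, greenKernel (n - 1) t σ)
          - 2 * ∫ σ in -π..π, greenKernel n t σ) := by
        simp only [lap, Gfun_eq_integral_greenKernel]
        ring
    _ = 2 / π * ∫ σ in -π..π, lap (fun m => greenKernel m t σ) n := by
        simp only [lap]
        rw [intervalIntegral.integral_sub ((hI _).add (hI _)) ((hI n).const_mul 2),
          intervalIntegral.integral_add (hI _) (hI _), intervalIntegral.integral_const_mul]
    _ = 2 / π * ∫ σ in -π..π, -4 * sin σ ^ 2 * greenKernel n t σ := by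
        simp only [lap_greenKernel]

theorem hasDerivAt_Gfun (t : ℝ) :
    HasDerivAt (Gfun n) (2 / π * ∫ σ in -π..π, 2 * cos (2 * σ * n) * cos (sin σ * (2 * t))) t := by
  rw [funext (Gfun_eq_integral_greenKernel n)]
  refine (intervalIntegral.hasDerivAt_integral_of_forall_hasDerivAt_of_norm_le (C := 2)
    (fun x => (measurable_greenKernel n x).aestronglyMeasurable)
    (intervalIntegrable_greenKernel n t _ _) (by fun_prop) (fun x σ => ?_)
    (fun x σ => hasDerivAt_greenKernel n σ x)).const_mul _
  rw [norm_mul, norm_mul, Real.norm_two, Real.norm_eq_abs, Real.norm_eq_abs]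
  calc _ ≤ (2 : ℝ) * 1 * 1 := by gcongr <;> exact abs_cos_le_one _
    _ = 2 := by norm_num

theorem hasDerivAt_deriv_Gfun (t : ℝ) :
    HasDerivAt (deriv (Gfun n)) (lap (fun m => Gfun m t) n) t := by
  have h_integrand : ∀ σ, -4 * sin σ ^ 2 * greenKernel n t σ
      = -4 * sin σ * (cos (2 * σ * n) * sin (sin σ * (2 * t))) := fun σ => by
    rw [greenKernel, ← mul_sinMulDiv]
    ring
  rw [funext fun t => (hasDerivAt_Gfun n t).deriv, lap_Gfun, funext h_integrand]
  refine (intervalIntegral.hasDerivAt_integral_of_forall_hasDerivAt_of_norm_le (C := 4)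
    (fun x => by fun_prop) ((by fun_prop : Continuous _).intervalIntegrable _ _) (by fun_prop)
    (fun x σ => ?_) (fun x σ => hasDerivAt_greenKernel_deriv n σ x)).const_mul _
  rw [norm_mul, norm_mul, norm_mul, norm_neg, Real.norm_ofNat, Real.norm_eq_abs,
    Real.norm_eq_abs, Real.norm_eq_abs]
  calc _ ≤ (4 : ℝ) * 1 * (1 * 1) := by
        gcongr
        exacts [abs_sin_le_one _, abs_cos_le_one _, abs_sin_le_one _]
    _ = 4 := by norm_num

end Green

/-- `t ↦ G(n,t)` is twice differentiable, `G(n,0) = 0`, and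
`∂ₜ²G(n,t) = G(n+1,t) + G(n-1,t) - 2G(n,t)` for all `n ∈ ℤ`, `t ∈ ℝ`. -/
theorem green_G_solves_wave (n : ℤ) :
    Differentiable ℝ (Gfun n) ∧ Differentiable ℝ (deriv (Gfun n)) ∧
    Gfun n 0 = 0 ∧
    ∀ t : ℝ, deriv (deriv (Gfun n)) t
      = Gfun (n + 1) t + Gfun (n - 1) t - 2 * Gfun n t :=
  ⟨fun t => (hasDerivAt_Gfun n t).differentiableAt,
    fun t => (hasDerivAt_deriv_Gfun n t).differentiableAt,
    Gfun_apply_zero n,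
    fun t => (hasDerivAt_deriv_Gfun n t).deriv⟩
end

section
/- Let p ≥ 3 be an odd integer, χ_p > 0, T > 0, and let α = (α_n)_{n∈ℤ} and δ = (δ_n)_{n∈ℤ} be families of C² real functions on [0,T), each with finite energy, both solving the FPU equation α̈_n(t) = Δα_n(t) + χ_p·Δ(α_n(t)^p) on [0,T), and with the same initial data: α_n(0) = δ_n(0) and α̇_n(0) = δ̇_n(0) for all n ∈ ℤ. Set z_n(t) = Σ_{m≤n−1} (α_m(t) − δ_m(t)) and φ(t) = Σ_{n∈ℤ} [ ż_n(t)² + (z_{n+1}(t) − z_n(t))² ], and assume that the series defining φ(t) and the series of its term-wise time derivatives converge locally uniformly on [0,T). Then α_n(t) = δ_n(t) for all n ∈ ℤ and all t ∈ [0,T). -/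
open Set Filter

/-! The difference `w = α - δ` vanishes to second order at `t = 0`, is bounded (finite energy
controls `sup_n |α_n|`), and since `x ↦ x ^ p` is Lipschitz on bounded sets, `|ẅ_n(t)|` is at
most `K · sup_j |w_j(t)|`. Integrating twice and iterating gives `|w_n(t)| ≤ B K^m t^(2m) / (2m)!`
for every `m`, hence `w = 0`. -/

open Topology

section SecondOrderUniqueness

theorem norm_le_of_norm_deriv_le_pow_div_factorial {E : Type*} [NormedAddCommGroup E]
    [NormedSpace ℝ E] {f f' : ℝ → E} {T c : ℝ} {k : ℕ}
    (hf : ∀ x ∈ Ico 0 T, HasDerivWithinAt f (f' x) (Ico 0 T) x) (h0 : f 0 = 0)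
    (hf' : ∀ x ∈ Ico 0 T, ‖f' x‖ ≤ c * x ^ k / k.factorial) :
    ∀ x ∈ Ico 0 T, ‖f x‖ ≤ c * x ^ (k + 1) / (k + 1).factorial := by
  intro x hx
  have hsub : Icc 0 x ⊆ Ico 0 T := Icc_subset_Ico_right hx.2
  have hB : ∀ y, HasDerivAt (fun y => c * y ^ (k + 1) / (k + 1).factorial)
      (c * y ^ k / k.factorial) y := by
    intro y
    refine (((hasDerivAt_pow (k + 1) y).const_mul c).div_const _).congr_deriv ?_
    rw [Nat.factorial_succ, Nat.add_sub_cancel]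
    push_cast
    field_simp
  refine image_norm_le_of_norm_deriv_right_le_deriv_boundary
    (fun y hy => (hf y (hsub hy)).continuousWithinAt.mono hsub) (fun y hy => ?_)
    (by simp [h0]) hB (fun y hy => hf' y (hsub (Ico_subset_Icc_self hy)))
    (right_mem_Icc.2 hx.1)
  exact (hf y (hsub (Ico_subset_Icc_self hy))).mono_of_mem_nhdsWithin
    (mem_of_superset (Ico_mem_nhdsGE (hy.2.trans_le hx.2.le)) (Ico_subset_Ico_left hy.1))

variable {ι : Type*} {w w' w'' : ι → ℝ → ℝ} {T B K : ℝ}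
  (hw : ∀ i, ∀ x ∈ Ico 0 T, HasDerivWithinAt (w i) (w' i x) (Ico 0 T) x)
  (hw' : ∀ i, ∀ x ∈ Ico 0 T, HasDerivWithinAt (w' i) (w'' i x) (Ico 0 T) x)
  (h0 : ∀ i, w i 0 = 0) (h0' : ∀ i, w' i 0 = 0)
  (hB : ∀ i, ∀ x ∈ Ico 0 T, |w i x| ≤ B)
  (hK : ∀ i, ∀ x ∈ Ico 0 T, ∀ A, (∀ j, |w j x| ≤ A) → |w'' i x| ≤ K * A)
include hw hw' h0 h0' hB hK

theorem abs_le_of_second_deriv_le_sup (m : ℕ) :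
    ∀ i, ∀ x ∈ Ico 0 T, |w i x| ≤ B * K ^ m * x ^ (2 * m) / (2 * m).factorial := by
  induction m with
  | zero => simpa using hB
  | succ m ih =>
    intro i
    have hw''_le : ∀ x ∈ Ico 0 T,
        ‖w'' i x‖ ≤ B * K ^ (m + 1) * x ^ (2 * m) / (2 * m).factorial :=
      fun x hx => (hK i x hx _ fun j => ih j x hx).trans_eq (by ring)
    have hw'_le := norm_le_of_norm_deriv_le_pow_div_factorial (hw' i) (h0' i) hw''_le
    intro x hx
    rw [show 2 * (m + 1) = 2 * m + 1 + 1 by ring]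
    simpa only [Real.norm_eq_abs] using
      norm_le_of_norm_deriv_le_pow_div_factorial (hw i) (h0 i) hw'_le x hx

theorem eq_zero_of_second_deriv_le_sup (hK0 : 0 ≤ K) : ∀ i, ∀ x ∈ Ico 0 T, w i x = 0 := by
  intro i x hx
  have hlim :
      Tendsto (fun m : ℕ => B * K ^ m * x ^ (2 * m) / (2 * m).factorial) atTop (𝓝 0) := by
    have h := ((FloorSemiring.tendsto_pow_div_factorial_atTop (√K * x)).comp
      (tendsto_atTop_mono (fun m => Nat.le_mul_of_pos_left m two_pos) tendsto_id)).const_mul B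
    rw [mul_zero] at h
    refine h.congr fun m => ?_
    simp only [Function.comp_apply, mul_pow, pow_mul, Real.sq_sqrt hK0]
    ring
  exact abs_nonpos_iff.mp <| ge_of_tendsto' hlim fun m =>
    abs_le_of_second_deriv_le_sup hw hw' h0 h0' hB hK m i x hx

end SecondOrderUniqueness

theorem ContDiffOn.hasDerivWithinAt_derivWithin_two {f : ℝ → ℝ} {s : Set ℝ}
    (hf : ContDiffOn ℝ 2 f s) (hs : UniqueDiffOn ℝ s) {x : ℝ} (hx : x ∈ s) :
    HasDerivWithinAt f (derivWithin f s x) s x ∧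
      HasDerivWithinAt (derivWithin f s) (derivWithin (derivWithin f s) s x) s x :=
  ⟨(hf.differentiableOn two_ne_zero x hx).hasDerivWithinAt,
    ((hf.derivWithin hs (by norm_num)).differentiableOn one_ne_zero x hx).hasDerivWithinAt⟩

theorem FiniteEnergyOn.exists_abs_le {α : ℤ → ℝ → ℝ} {s : Set ℝ} {T : ℝ}
    (hE : FiniteEnergyOn α s T) : ∃ C, 0 ≤ C ∧ ∀ n, ∀ t ∈ Ico 0 T, |α n t| ≤ C := by
  obtain ⟨-, M, hM⟩ := hE
  refine ⟨√M, Real.sqrt_nonneg M, fun n t ht => ?_⟩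
  obtain ⟨-, hsum, hle⟩ := hM t ht
  have hsq : α n t ^ 2 ≤ M := by
    have := hsum.le_tsum n fun j _ => sq_nonneg (α j t)
    have : 0 ≤ ∑' n, tailSum (fun m => derivWithin (α m) s t) n ^ 2 :=
      tsum_nonneg fun n => sq_nonneg _
    linarith
  simpa only [Real.sqrt_sq_eq_abs] using Real.sqrt_le_sqrt hsq

theorem lap_sub (f g : ℤ → ℝ) (n : ℤ) : lap f n - lap g n = lap (f - g) n := by
  simp only [lap, Pi.sub_apply]
  ring

theorem abs_lap_le {f : ℤ → ℝ} {A : ℝ} (hf : ∀ m, |f m| ≤ A) (n : ℤ) : |lap f n| ≤ 4 * A := by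
  have h₁ := abs_le.mp (hf (n + 1))
  have h₂ := abs_le.mp (hf (n - 1))
  have h₃ := abs_le.mp (hf n)
  rw [lap, abs_le]
  constructor <;> linarith

theorem abs_fpu_force_sub_le {p : ℕ} {χ C A : ℝ} {a b : ℤ → ℝ}
    (ha : ∀ m, |a m| ≤ C) (hb : ∀ m, |b m| ≤ C) (hab : ∀ m, |a m - b m| ≤ A) (n : ℤ) :
    |(lap a n + χ * lap (fun m => a m ^ p) n) - (lap b n + χ * lap (fun m => b m ^ p) n)|
      ≤ (4 + 4 * |χ| * (p * C ^ (p - 1))) * A := by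
  have hA : 0 ≤ A := (abs_nonneg _).trans (hab 0)
  have hpow : ∀ m, |a m ^ p - b m ^ p| ≤ A * (p * C ^ (p - 1)) := fun m =>
    calc |a m ^ p - b m ^ p| ≤ |a m - b m| * p * max |a m| |b m| ^ (p - 1) :=
          abs_pow_sub_pow_le _ _ _
      _ ≤ A * p * C ^ (p - 1) := by
          gcongr
          exacts [hab m, max_le (ha m) (hb m)]
      _ = A * (p * C ^ (p - 1)) := by ring
  calc _ = |lap (a - b) n + χ * lap ((fun m => a m ^ p) - fun m => b m ^ p) n| := by
        rw [← lap_sub, ← lap_sub]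
        ring_nf
    _ ≤ |lap (a - b) n| + |χ| * |lap ((fun m => a m ^ p) - fun m => b m ^ p) n| := by
        rw [← abs_mul]
        exact abs_add_le _ _
    _ ≤ 4 * A + |χ| * (4 * (A * (p * C ^ (p - 1)))) := by
        gcongr
        exacts [abs_lap_le hab n, abs_lap_le hpow n]
    _ = (4 + 4 * |χ| * (p * C ^ (p - 1))) * A := by ring

theorem fpu_uniqueness_general (p : ℕ)
    (χ T : ℝ)
    (α δ : ℤ → ℝ → ℝ)
    (hC2α : ∀ n : ℤ, ContDiffOn ℝ 2 (α n) (Ico 0 T))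
    (hC2δ : ∀ n : ℤ, ContDiffOn ℝ 2 (δ n) (Ico 0 T))
    (hEα : FiniteEnergyOn α (Ico 0 T) T)
    (hEδ : FiniteEnergyOn δ (Ico 0 T) T)
    (hsolα : SolvesFPU p χ α (Ico 0 T))
    (hsolδ : SolvesFPU p χ δ (Ico 0 T))
    (hic1 : ∀ n : ℤ, α n 0 = δ n 0)
    (hic2 : ∀ n : ℤ, derivWithin (α n) (Ico 0 T) 0 = derivWithin (δ n) (Ico 0 T) 0) :
    ∀ n : ℤ, ∀ t ∈ Ico (0 : ℝ) T, α n t = δ n t := by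
  set s := Ico (0 : ℝ) T
  obtain ⟨Cα, hCα0, hCα⟩ := hEα.exists_abs_le
  obtain ⟨Cδ, -, hCδ⟩ := hEδ.exists_abs_le
  set C := max Cα Cδ
  have hα : ∀ n, ∀ t ∈ s, |α n t| ≤ C := fun n t ht => (hCα n t ht).trans (le_max_left _ _)
  have hδ : ∀ n, ∀ t ∈ s, |δ n t| ≤ C := fun n t ht => (hCδ n t ht).trans (le_max_right _ _)
  have hs : UniqueDiffOn ℝ s := uniqueDiffOn_Ico 0 T
  have hw := eq_zero_of_second_deriv_le_sup (w := fun n t => α n t - δ n t)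
    (w' := fun n t => derivWithin (α n) s t - derivWithin (δ n) s t)
    (w'' := fun n t =>
      derivWithin (derivWithin (α n) s) s t - derivWithin (derivWithin (δ n) s) s t)
    (B := C + C) (K := 4 + 4 * |χ| * (p * C ^ (p - 1)))
    (fun n x hx => ((hC2α n).hasDerivWithinAt_derivWithin_two hs hx).1.sub
      ((hC2δ n).hasDerivWithinAt_derivWithin_two hs hx).1)
    (fun n x hx => ((hC2α n).hasDerivWithinAt_derivWithin_two hs hx).2.sub
      ((hC2δ n).hasDerivWithinAt_derivWithin_two hs hx).2)
    (fun n => sub_eq_zero.mpr (hic1 n)) (fun n => sub_eq_zero.mpr (hic2 n))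
    (fun n x hx => (abs_sub _ _).trans (add_le_add (hα n x hx) (hδ n x hx)))
    (fun n x hx A hA => by
      simp only [hsolα n x hx, hsolδ n x hx]
      exact abs_fpu_force_sub_le (hα · x hx) (hδ · x hx) hA n)
    (by positivity)
  exact fun n t ht => sub_eq_zero.mp (hw n t ht)

/-- uniqueness of finite-energy solutions of the FPU lattice: two solutions
with the same initial data coincide, assuming the series defining
`φ(t) = Σ_n [ż_n² + (z_{n+1}-z_n)²]` (with `z_n = Σ_{m≤n-1}(α_m - δ_m)`) and the series of
its term-wise time derivatives converge locally uniformly on `[0,T)`. -/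
theorem fpu_uniqueness (p : ℕ) (hodd : Odd p) (hp : 3 ≤ p)
    (χ T : ℝ) (hχ : 0 < χ) (hT : 0 < T)
    (α δ : ℤ → ℝ → ℝ)
    (hC2α : ∀ n : ℤ, ContDiffOn ℝ 2 (α n) (Ico 0 T))
    (hC2δ : ∀ n : ℤ, ContDiffOn ℝ 2 (δ n) (Ico 0 T))
    (hEα : FiniteEnergyOn α (Ico 0 T) T)
    (hEδ : FiniteEnergyOn δ (Ico 0 T) T)
    (hsolα : SolvesFPU p χ α (Ico 0 T))
    (hsolδ : SolvesFPU p χ δ (Ico 0 T))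
    (hic1 : ∀ n : ℤ, α n 0 = δ n 0)
    (hic2 : ∀ n : ℤ, derivWithin (α n) (Ico 0 T) 0 = derivWithin (δ n) (Ico 0 T) 0)
    (hzsum : ∀ n : ℤ, ∀ t ∈ Ico (0 : ℝ) T,
      Summable (fun m : {m : ℤ // m ≤ n - 1} => α m.1 t - δ m.1 t))
    (z : ℤ → ℝ → ℝ)
    (hz : ∀ (n : ℤ) (t : ℝ), z n t = ∑' m : {m : ℤ // m ≤ n - 1}, (α m.1 t - δ m.1 t))
    (g : ℤ → ℝ → ℝ)
    (hg : ∀ (n : ℤ) (t : ℝ),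
      g n t = (derivWithin (z n) (Ico 0 T) t) ^ 2 + (z (n + 1) t - z n t) ^ 2)
    (hconv : ∀ t ∈ Ico (0 : ℝ) T, Summable (fun n : ℤ => g n t))
    (hdiff : ∀ n : ℤ, DifferentiableOn ℝ (g n) (Ico 0 T))
    (hu1 : TendstoLocallyUniformlyOn (fun (s : Finset ℤ) (t : ℝ) => ∑ n ∈ s, g n t)
      (fun t => ∑' n : ℤ, g n t) atTop (Ico 0 T))
    (hu2 : TendstoLocallyUniformlyOn
      (fun (s : Finset ℤ) (t : ℝ) => ∑ n ∈ s, derivWithin (g n) (Ico 0 T) t)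
      (fun t => ∑' n : ℤ, derivWithin (g n) (Ico 0 T) t) atTop (Ico 0 T)) :
    ∀ n : ℤ, ∀ t ∈ Ico (0 : ℝ) T, α n t = δ n t :=
  fpu_uniqueness_general p χ T α δ hC2α hC2δ hEα hEδ hsolα hsolδ hic1 hic2
end

section
/- Let p ≥ 2 be an integer. There exists a constant C > 0, depending only on p, such that for every T > 0, every M > 0, and every family α = (α_n)_{n∈ℤ} of continuous real functions on [0,T) with sup_{0≤t<T} Σ_{n∈ℤ} α_n(t)² ≤ M², the double series Σ_{m∈ℤ} ∫₀ᵗ G₁(n−m, t−s)·α_m(s)^p ds converges absolutely for every n ∈ ℤ and t ∈ [0,T), and sup_{0≤t<T} Σ_{n∈ℤ} ( Σ_{m∈ℤ} ∫₀ᵗ G₁(n−m, t−s)·α_m(s)^p ds )² ≤ C·M^{2p}·(T² + T⁴)². -/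
open Set Filter

/-!
Two integrations by parts in `σ` (the kernel `sin (2t sin σ) sin σ` and its `σ`-derivative vanish
at `±π`) give `|G₁(n,t)| ≤ 8 (|t| + |t|³) / n²`, and `|G₁(0,t)| ≤ 8|t|` directly. Hence the inner
series is dominated by `8 (t + t³)` times the convolution of the summable weight `w n = 1 / n²`
(`w 0 = 1`) with `b m = ∫₀ᵗ |α_m|^p`, and Young's inequality `‖w ⋆ b‖₂ ≤ ‖w‖₁ ‖b‖₂` reduces the
claim to `∑ₘ b m² ≤ t² M^{2p}`. That follows from `|α_m|^p ≤ M^{p-2} α_m²` and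
`∑ₘ ∫₀ᵗ α_m² ≤ t M²`.
-/

open Real intervalIntegral MeasureTheory
open scoped Interval

theorem integral_mul_cos_eq_of_hasDerivAt {f f' f'' : ℝ → ℝ} {a b k : ℝ} (hk : k ≠ 0)
    (hf : ∀ x ∈ uIcc a b, HasDerivAt f (f' x) x) (hf' : ∀ x ∈ uIcc a b, HasDerivAt f' (f'' x) x)
    (hf'int : IntervalIntegrable f' volume a b) (hf''int : IntervalIntegrable f'' volume a b)
    (ha : f a = 0) (hb : f b = 0) (ha' : f' a = 0) (hb' : f' b = 0) :
    ∫ x in a..b, f x * cos (k * x) = -(∫ x in a..b, f'' x * cos (k * x)) / k ^ 2 := by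
  have hsin : ∀ x, HasDerivAt (fun x => sin (k * x) / k) (cos (k * x)) x := fun x => by
    refine (((hasDerivAt_id' x).const_mul k).sin.div_const k).congr_deriv ?_
    field_simp
  have hcos : ∀ x, HasDerivAt (fun x => -cos (k * x) / k ^ 2) (sin (k * x) / k) x := fun x => by
    refine (((hasDerivAt_id' x).const_mul k).cos.neg.div_const (k ^ 2)).congr_deriv ?_
    field_simp
  rw [integral_mul_deriv_eq_deriv_mul hf (fun x _ => hsin x) hf'int
      ((by fun_prop : Continuous fun x => cos (k * x)).intervalIntegrable a b),
    integral_mul_deriv_eq_deriv_mul hf' (fun x _ => hcos x) hf''int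
      ((by fun_prop : Continuous fun x => sin (k * x) / k).intervalIntegrable a b)]
  simp only [ha, hb, ha', hb', zero_mul, mul_div_assoc', mul_neg,
    intervalIntegral.integral_neg, intervalIntegral.integral_div]
  ring

theorem abs_integral_mul_cos_le_of_hasDerivAt {f f' f'' : ℝ → ℝ} {a b k C : ℝ} (hk : k ≠ 0)
    (hf : ∀ x ∈ uIcc a b, HasDerivAt f (f' x) x) (hf' : ∀ x ∈ uIcc a b, HasDerivAt f' (f'' x) x)
    (hf'int : IntervalIntegrable f' volume a b) (hf''int : IntervalIntegrable f'' volume a b)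
    (ha : f a = 0) (hb : f b = 0) (ha' : f' a = 0) (hb' : f' b = 0)
    (hC : ∀ x ∈ Ι a b, |f'' x| ≤ C) :
    |∫ x in a..b, f x * cos (k * x)| ≤ C * |b - a| / k ^ 2 := by
  rw [integral_mul_cos_eq_of_hasDerivAt hk hf hf' hf'int hf''int ha hb ha' hb', abs_div, abs_neg,
    abs_of_nonneg (sq_nonneg k)]
  gcongr
  rw [← Real.norm_eq_abs]
  refine intervalIntegral.norm_integral_le_of_norm_le_const fun x hx => ?_
  calc ‖f'' x * cos (k * x)‖ = |f'' x| * |cos (k * x)| := by rw [Real.norm_eq_abs, abs_mul]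
    _ ≤ |f'' x| * 1 := by gcongr; exact abs_cos_le_one _
    _ ≤ C := (mul_one _).trans_le (hC x hx)

noncomputable def g1Kernel (t σ : ℝ) : ℝ := sin (2 * t * sin σ) * sin σ

noncomputable def g1KernelDeriv (t σ : ℝ) : ℝ :=
  2 * t * cos σ * cos (2 * t * sin σ) * sin σ + sin (2 * t * sin σ) * cos σ

noncomputable def g1KernelDeriv2 (t σ : ℝ) : ℝ :=
  (4 * t * cos σ ^ 2 - 2 * t * sin σ ^ 2) * cos (2 * t * sin σ)
    - 4 * t ^ 2 * cos σ ^ 2 * sin σ * sin (2 * t * sin σ) - sin σ * sin (2 * t * sin σ)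

lemma hasDerivAt_g1Kernel (t σ : ℝ) : HasDerivAt (g1Kernel t) (g1KernelDeriv t σ) σ := by
  have hu := (hasDerivAt_sin σ).const_mul (2 * t)
  refine (hu.sin.mul (hasDerivAt_sin σ)).congr_deriv ?_
  unfold g1KernelDeriv; ring

lemma hasDerivAt_g1KernelDeriv (t σ : ℝ) :
    HasDerivAt (g1KernelDeriv t) (g1KernelDeriv2 t σ) σ := by
  have hu := (hasDerivAt_sin σ).const_mul (2 * t)
  have h := ((((hasDerivAt_cos σ).const_mul (2 * t)).mul hu.cos).mul (hasDerivAt_sin σ)).add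
    (hu.sin.mul (hasDerivAt_cos σ))
  refine h.congr_deriv ?_
  simp only [Pi.mul_apply]
  unfold g1KernelDeriv2; ring

lemma abs_sin_two_mul_mul_sin_le (t σ : ℝ) : |sin (2 * t * sin σ)| ≤ 2 * |t| :=
  abs_sin_le_abs.trans <| by
    rw [abs_mul, abs_mul, abs_two]
    exact mul_le_of_le_one_right (by positivity) (abs_sin_le_one σ)

lemma abs_g1Kernel_le (t σ : ℝ) : |g1Kernel t σ| ≤ 2 * |t| := by
  rw [g1Kernel, abs_mul]
  calc |sin (2 * t * sin σ)| * |sin σ| ≤ 2 * |t| * 1 := by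
        gcongr; exacts [abs_sin_two_mul_mul_sin_le t σ, abs_sin_le_one σ]
    _ = 2 * |t| := mul_one _

lemma abs_g1KernelDeriv2_le (t σ : ℝ) : |g1KernelDeriv2 t σ| ≤ 8 * (|t| + |t| ^ 3) := by
  have hS := abs_sin_two_mul_mul_sin_le t σ
  have hs := abs_sin_le_one σ
  have hc := abs_cos_le_one σ
  have hC := abs_cos_le_one (2 * t * sin σ)
  have hsc := sin_sq_add_cos_sq σ
  have h1 : |(4 * t * cos σ ^ 2 - 2 * t * sin σ ^ 2) * cos (2 * t * sin σ)| ≤ 6 * |t| := by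
    have hq : |4 * cos σ ^ 2 - 2 * sin σ ^ 2| ≤ 6 :=
      abs_le.mpr ⟨by nlinarith [sq_nonneg (cos σ)], by nlinarith [sq_nonneg (sin σ)]⟩
    calc |(4 * t * cos σ ^ 2 - 2 * t * sin σ ^ 2) * cos (2 * t * sin σ)|
        = |t| * |4 * cos σ ^ 2 - 2 * sin σ ^ 2| * |cos (2 * t * sin σ)| := by
          rw [← abs_mul, ← abs_mul]; ring_nf
      _ ≤ |t| * 6 * 1 := by gcongr
      _ = 6 * |t| := by ring
  have h2 : |4 * t ^ 2 * cos σ ^ 2 * sin σ * sin (2 * t * sin σ)| ≤ 8 * |t| ^ 3 := by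
    calc |4 * t ^ 2 * cos σ ^ 2 * sin σ * sin (2 * t * sin σ)|
        = 4 * |t| ^ 2 * |cos σ| ^ 2 * |sin σ| * |sin (2 * t * sin σ)| := by
          simp only [abs_mul, abs_pow, Nat.abs_ofNat]
      _ ≤ 4 * |t| ^ 2 * 1 ^ 2 * 1 * (2 * |t|) := by gcongr
      _ = 8 * |t| ^ 3 := by ring
  have h3 : |sin σ * sin (2 * t * sin σ)| ≤ 2 * |t| := by
    rw [abs_mul]
    nlinarith [abs_nonneg (sin σ), abs_nonneg (sin (2 * t * sin σ))]
  unfold g1KernelDeriv2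
  refine ((abs_sub _ _).trans (add_le_add_left (abs_sub _ _) _)).trans ?_
  linarith

lemma G1fun_eq_integral_g1Kernel (n : ℤ) (t : ℝ) :
    G1fun n t = 2 / π * ∫ σ in -π..π, g1Kernel t σ * cos (2 * n * σ) := by
  unfold G1fun g1Kernel
  congr 1
  refine integral_congr fun σ _ => ?_
  ring_nf

lemma abs_pi_sub_neg_pi : |π - -π| = 2 * π := by
  rw [sub_neg_eq_add, ← two_mul, abs_of_pos (by positivity)]

lemma abs_G1fun_le (n : ℤ) (t : ℝ) : |G1fun n t| ≤ 8 * |t| := by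
  have hint : |∫ σ in -π..π, g1Kernel t σ * cos (2 * n * σ)| ≤ 2 * |t| * |π - -π| := by
    rw [← Real.norm_eq_abs]
    refine intervalIntegral.norm_integral_le_of_norm_le_const fun σ _ => ?_
    calc ‖g1Kernel t σ * cos (2 * n * σ)‖ = |g1Kernel t σ| * |cos (2 * n * σ)| := by
          rw [Real.norm_eq_abs, abs_mul]
      _ ≤ 2 * |t| * 1 := by gcongr; exacts [abs_g1Kernel_le t σ, abs_cos_le_one _]
      _ = 2 * |t| := mul_one _
  rw [G1fun_eq_integral_g1Kernel, abs_mul, abs_of_pos (by positivity)]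
  calc 2 / π * |∫ σ in -π..π, g1Kernel t σ * cos (2 * n * σ)| ≤ 2 / π * (2 * |t| * |π - -π|) := by
        gcongr
    _ = 8 * |t| := by rw [abs_pi_sub_neg_pi]; field_simp; ring

lemma abs_G1fun_le_of_ne_zero {n : ℤ} (hn : n ≠ 0) (t : ℝ) :
    |G1fun n t| ≤ 8 * (|t| + |t| ^ 3) / (n : ℝ) ^ 2 := by
  have hk : (2 * n : ℝ) ≠ 0 := by simpa using hn
  have hint := abs_integral_mul_cos_le_of_hasDerivAt (a := -π) (b := π) hk
    (fun σ _ => hasDerivAt_g1Kernel t σ) (fun σ _ => hasDerivAt_g1KernelDeriv t σ)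
    ((by unfold g1KernelDeriv; fun_prop : Continuous (g1KernelDeriv t)).intervalIntegrable _ _)
    ((by unfold g1KernelDeriv2; fun_prop : Continuous (g1KernelDeriv2 t)).intervalIntegrable _ _)
    (by simp [g1Kernel]) (by simp [g1Kernel]) (by simp [g1KernelDeriv]) (by simp [g1KernelDeriv])
    (fun σ _ => abs_g1KernelDeriv2_le t σ)
  rw [G1fun_eq_integral_g1Kernel, abs_mul, abs_of_pos (by positivity)]
  calc 2 / π * |∫ σ in -π..π, g1Kernel t σ * cos (2 * n * σ)|
      ≤ 2 / π * (8 * (|t| + |t| ^ 3) * |π - -π| / (2 * n) ^ 2) := by gcongr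
    _ = 8 * (|t| + |t| ^ 3) / (n : ℝ) ^ 2 := by
      rw [abs_pi_sub_neg_pi]; field_simp

noncomputable def invSqWeight (n : ℤ) : ℝ := if n = 0 then 1 else 1 / (n : ℝ) ^ 2

lemma invSqWeight_nonneg (n : ℤ) : 0 ≤ invSqWeight n := by
  unfold invSqWeight; split_ifs <;> positivity

lemma summable_invSqWeight : Summable invSqWeight := by
  refine .of_norm_bounded_eventually (Real.summable_one_div_int_pow.2 one_lt_two) ?_
  filter_upwards [(Set.finite_singleton (0 : ℤ)).compl_mem_cofinite] with n hn
  rw [invSqWeight, if_neg (by simpa using hn), Real.norm_of_nonneg (by positivity)]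

lemma tsum_invSqWeight_pos : 0 < ∑' n, invSqWeight n :=
  zero_lt_one.trans_le <| by
    simpa [invSqWeight] using summable_invSqWeight.le_tsum 0 fun n _ => invSqWeight_nonneg n

lemma abs_G1fun_le_mul_invSqWeight (n : ℤ) (t : ℝ) :
    |G1fun n t| ≤ 8 * (|t| + |t| ^ 3) * invSqWeight n := by
  rcases eq_or_ne n 0 with rfl | hn
  · rw [invSqWeight, if_pos rfl, mul_one]
    linarith [abs_G1fun_le 0 t, pow_nonneg (abs_nonneg t) 3]
  · rw [invSqWeight, if_neg hn, mul_one_div]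
    exact abs_G1fun_le_of_ne_zero hn t

lemma continuous_G1fun (n : ℤ) : Continuous (G1fun n) :=
  continuous_const.mul <| continuous_parametric_intervalIntegral_of_continuous' (by fun_prop) _ _

theorem tsum_sq_le_tsum_mul_tsum_of_sq_le_mul {ι : Type*} {r f g : ι → ℝ} (hr : Summable r)
    (hf : Summable f) (hg : Summable g) (hf0 : ∀ i, 0 ≤ f i) (hg0 : ∀ i, 0 ≤ g i)
    (h : ∀ i, r i ^ 2 ≤ f i * g i) : (∑' i, r i) ^ 2 ≤ (∑' i, f i) * ∑' i, g i :=
  le_of_tendsto_of_tendsto' (hr.hasSum.pow 2) (Filter.Tendsto.mul hf.hasSum hg.hasSum) fun s =>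
    Finset.sum_sq_le_sum_mul_sum_of_sq_le_mul s (fun i _ => hf0 i) (fun i _ => hg0 i)
      fun i _ => h i

section Convolution

variable {G : Type*} [AddGroup G] {w b : G → ℝ}

lemma summable_comp_sub_left (hw : Summable w) (n : G) : Summable fun m => w (n - m) :=
  (Equiv.subLeft n).summable_iff.2 hw

lemma tsum_comp_sub_left (n : G) : ∑' m, w (n - m) = ∑' m, w m :=
  (Equiv.subLeft n).tsum_eq w

lemma summable_comp_sub_right (hw : Summable w) (m : G) : Summable fun n => w (n - m) :=
  (Equiv.subRight m).summable_iff.2 hw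

lemma tsum_comp_sub_right (m : G) : ∑' n, w (n - m) = ∑' n, w n :=
  (Equiv.subRight m).tsum_eq w

lemma summable_comp_sub_mul_sq (hw0 : ∀ n, 0 ≤ w n) (hw : Summable w)
    (hb : Summable fun m => b m ^ 2) (n : G) : Summable fun m => w (n - m) * b m ^ 2 :=
  .of_nonneg_of_le (fun _ => mul_nonneg (hw0 _) (sq_nonneg _))
    (fun m => mul_le_mul_of_nonneg_left (hb.le_tsum m fun _ _ => sq_nonneg _) (hw0 _))
    ((summable_comp_sub_left hw n).mul_right _)

lemma summable_comp_sub_mul (hw0 : ∀ n, 0 ≤ w n) (hw : Summable w) (hb0 : ∀ m, 0 ≤ b m)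
    (hb : Summable fun m => b m ^ 2) (n : G) : Summable fun m => w (n - m) * b m :=
  .of_nonneg_of_le (fun m => mul_nonneg (hw0 _) (hb0 m))
    (fun m => mul_le_mul_of_nonneg_left (by nlinarith [sq_nonneg (b m - 1)] : b m ≤ 1 + b m ^ 2)
      (hw0 _))
    (((summable_comp_sub_left hw n).add (summable_comp_sub_mul_sq hw0 hw hb n)).congr
      fun m => by ring)

lemma sq_tsum_comp_sub_mul_le (hw0 : ∀ n, 0 ≤ w n) (hw : Summable w) (hb0 : ∀ m, 0 ≤ b m)
    (hb : Summable fun m => b m ^ 2) (n : G) :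
    (∑' m, w (n - m) * b m) ^ 2 ≤ (∑' k, w k) * ∑' m, w (n - m) * b m ^ 2 := by
  rw [← tsum_comp_sub_left (w := w) n]
  exact tsum_sq_le_tsum_mul_tsum_of_sq_le_mul (summable_comp_sub_mul hw0 hw hb0 hb n)
    (summable_comp_sub_left hw n) (summable_comp_sub_mul_sq hw0 hw hb n) (fun m => hw0 _)
    (fun m => mul_nonneg (hw0 _) (sq_nonneg _)) fun m => le_of_eq (by ring)

lemma sum_tsum_comp_sub_mul_sq_le (hw0 : ∀ n, 0 ≤ w n) (hw : Summable w)
    (hb : Summable fun m => b m ^ 2) (s : Finset G) :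
    ∑ n ∈ s, ∑' m, w (n - m) * b m ^ 2 ≤ (∑' k, w k) * ∑' m, b m ^ 2 := by
  have hs := fun n (_ : n ∈ s) => summable_comp_sub_mul_sq hw0 hw hb n
  rw [← Summable.tsum_finsetSum hs, ← tsum_mul_left]
  refine Summable.tsum_le_tsum (fun m => ?_) (summable_sum hs) (hb.mul_left _)
  rw [← Finset.sum_mul, ← tsum_comp_sub_right m]
  exact mul_le_mul_of_nonneg_right
    ((summable_comp_sub_right hw m).sum_le_tsum s fun n _ => hw0 _) (sq_nonneg _)

theorem young_conv_sq (hw0 : ∀ n, 0 ≤ w n) (hw : Summable w) (hb0 : ∀ m, 0 ≤ b m)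
    (hb : Summable fun m => b m ^ 2) :
    (∀ n, Summable fun m => w (n - m) * b m) ∧
      Summable (fun n => (∑' m, w (n - m) * b m) ^ 2) ∧
      ∑' n, (∑' m, w (n - m) * b m) ^ 2 ≤ (∑' n, w n) ^ 2 * ∑' m, b m ^ 2 := by
  have he : Summable fun n => ∑' m, w (n - m) * b m ^ 2 :=
    summable_of_sum_le (fun n => tsum_nonneg fun m => mul_nonneg (hw0 _) (sq_nonneg _))
      (sum_tsum_comp_sub_mul_sq_le hw0 hw hb)
  have hpoint := sq_tsum_comp_sub_mul_le hw0 hw hb0 hb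
  have hc : Summable fun n => (∑' m, w (n - m) * b m) ^ 2 :=
    .of_nonneg_of_le (fun n => sq_nonneg _) hpoint (he.mul_left _)
  refine ⟨summable_comp_sub_mul hw0 hw hb0 hb, hc, ?_⟩
  calc ∑' n, (∑' m, w (n - m) * b m) ^ 2 ≤ ∑' n, (∑' k, w k) * ∑' m, w (n - m) * b m ^ 2 :=
        hc.tsum_le_tsum hpoint (he.mul_left _)
    _ ≤ (∑' k, w k) * ((∑' k, w k) * ∑' m, b m ^ 2) := by
        rw [tsum_mul_left]
        exact mul_le_mul_of_nonneg_left
          (he.tsum_le_of_sum_le (sum_tsum_comp_sub_mul_sq_le hw0 hw hb)) (tsum_nonneg hw0)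
    _ = (∑' n, w n) ^ 2 * ∑' m, b m ^ 2 := by ring

theorem young_of_abs_le {f : G → G → ℝ} (hw0 : ∀ n, 0 ≤ w n) (hw : Summable w)
    (hb0 : ∀ m, 0 ≤ b m) (hb : Summable fun m => b m ^ 2) (hf : ∀ n m, |f n m| ≤ w (n - m) * b m) :
    (∀ n, Summable fun m => |f n m|) ∧ Summable (fun n => (∑' m, f n m) ^ 2) ∧
      ∑' n, (∑' m, f n m) ^ 2 ≤ (∑' n, w n) ^ 2 * ∑' m, b m ^ 2 := by
  obtain ⟨hc, hc2, hle⟩ := young_conv_sq hw0 hw hb0 hb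
  have hf1 : ∀ n, Summable fun m => |f n m| := fun n =>
    .of_nonneg_of_le (fun m => abs_nonneg _) (hf n) (hc n)
  have hsq : ∀ n, (∑' m, f n m) ^ 2 ≤ (∑' m, w (n - m) * b m) ^ 2 := fun n => by
    rw [← sq_abs]
    refine pow_le_pow_left₀ (abs_nonneg _) ?_ 2
    calc |∑' m, f n m| ≤ ∑' m, |f n m| := by
          simpa only [Real.norm_eq_abs] using
            norm_tsum_le_tsum_norm (f := f n) (by simpa only [Real.norm_eq_abs] using hf1 n)
      _ ≤ ∑' m, w (n - m) * b m := (hf1 n).tsum_le_tsum (hf n) (hc n)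
  have hf2 : Summable fun n => (∑' m, f n m) ^ 2 := .of_nonneg_of_le (fun n => sq_nonneg _) hsq hc2
  exact ⟨hf1, hf2, (hf2.tsum_le_tsum hsq hc2).trans hle⟩

end Convolution

lemma abs_pow_le_pow_sub_two_mul_sq {x M : ℝ} {p : ℕ} (hp : 2 ≤ p) (hM : 0 ≤ M)
    (hx : x ^ 2 ≤ M ^ 2) : |x| ^ p ≤ M ^ (p - 2) * x ^ 2 := by
  have hxM : |x| ≤ M := abs_le_of_sq_le_sq hx hM
  calc |x| ^ p = |x| ^ (p - 2) * |x| ^ 2 := by rw [← pow_add, Nat.sub_add_cancel hp]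
    _ ≤ M ^ (p - 2) * x ^ 2 := by rw [sq_abs]; gcongr

lemma summable_sq_and_tsum_sq_le {ι : Type*} {D : ι → ℝ} {K : ℝ} (hD0 : ∀ m, 0 ≤ D m)
    (hD : Summable D) (hK : ∑' m, D m ≤ K) :
    Summable (fun m => D m ^ 2) ∧ ∑' m, D m ^ 2 ≤ K ^ 2 := by
  have hle : ∀ m, D m ^ 2 ≤ K * D m := fun m => by
    rw [sq]; exact mul_le_mul_of_nonneg_right ((hD.le_tsum m fun j _ => hD0 j).trans hK) (hD0 m)
  have hsq : Summable fun m => D m ^ 2 :=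
    .of_nonneg_of_le (fun m => sq_nonneg _) hle (hD.mul_left K)
  refine ⟨hsq, ?_⟩
  calc ∑' m, D m ^ 2 ≤ ∑' m, K * D m := hsq.tsum_le_tsum hle (hD.mul_left K)
    _ = K * ∑' m, D m := tsum_mul_left
    _ ≤ K * K := mul_le_mul_of_nonneg_left hK ((tsum_nonneg hD0).trans hK)
    _ = K ^ 2 := (sq K).symm

section Potential

variable {ι : Type*} {α : ι → ℝ → ℝ} {t M : ℝ}

lemma summable_integral_sq_and_tsum_le (ht : 0 ≤ t) (hα : ∀ m, ContinuousOn (α m) (Icc 0 t))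
    (hsum : ∀ s ∈ Icc 0 t, Summable (fun m => α m s ^ 2) ∧ ∑' m, α m s ^ 2 ≤ M ^ 2) :
    Summable (fun m => ∫ s in 0..t, α m s ^ 2) ∧ ∑' m, ∫ s in 0..t, α m s ^ 2 ≤ t * M ^ 2 := by
  have hint : ∀ m, IntervalIntegrable (fun s => α m s ^ 2) volume 0 t := fun m =>
    ((hα m).pow 2).intervalIntegrable_of_Icc ht
  have hpartial : ∀ F : Finset ι, ∑ m ∈ F, ∫ s in 0..t, α m s ^ 2 ≤ t * M ^ 2 := fun F => by
    rw [← integral_finsetSum fun m _ => hint m]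
    calc ∫ s in 0..t, ∑ m ∈ F, α m s ^ 2 ≤ ∫ _ in 0..t, M ^ 2 :=
          integral_mono_on ht
            ((continuousOn_finsetSum F fun m _ => (hα m).pow 2).intervalIntegrable_of_Icc ht)
            intervalIntegrable_const
            fun s hs => ((hsum s hs).1.sum_le_tsum F fun m _ => sq_nonneg _).trans (hsum s hs).2
      _ = t * M ^ 2 := by simp
  have hD : Summable fun m => ∫ s in 0..t, α m s ^ 2 :=
    summable_of_sum_le (fun m => integral_nonneg ht fun s _ => sq_nonneg _) hpartial
  exact ⟨hD, hD.tsum_le_of_sum_le hpartial⟩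

lemma summable_sq_integral_abs_pow_and_tsum_le {p : ℕ} (hp : 2 ≤ p) (hM : 0 ≤ M) (ht : 0 ≤ t)
    (hα : ∀ m, ContinuousOn (α m) (Icc 0 t))
    (hsum : ∀ s ∈ Icc 0 t, Summable (fun m => α m s ^ 2) ∧ ∑' m, α m s ^ 2 ≤ M ^ 2) :
    Summable (fun m => (∫ s in 0..t, |α m s| ^ p) ^ 2) ∧
      ∑' m, (∫ s in 0..t, |α m s| ^ p) ^ 2 ≤ t ^ 2 * M ^ (2 * p) := by
  obtain ⟨hD, hDle⟩ := summable_integral_sq_and_tsum_le ht hα hsum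
  obtain ⟨hD2, hD2le⟩ := summable_sq_and_tsum_sq_le
    (fun m => integral_nonneg ht fun s _ => sq_nonneg (α m s)) hD hDle
  have hB : ∀ m,
      (∫ s in 0..t, |α m s| ^ p) ^ 2 ≤ (M ^ (p - 2)) ^ 2 * (∫ s in 0..t, α m s ^ 2) ^ 2 :=
    fun m => by
      rw [← mul_pow, ← intervalIntegral.integral_const_mul]
      refine pow_le_pow_left₀ (integral_nonneg ht fun s _ => by positivity) ?_ 2
      refine integral_mono_on ht (((hα m).abs.pow p).intervalIntegrable_of_Icc ht)
        (((hα m).pow 2).intervalIntegrable_of_Icc ht |>.const_mul _) fun s hs => ?_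
      exact abs_pow_le_pow_sub_two_mul_sq hp hM
        (((hsum s hs).1.le_tsum m fun j _ => sq_nonneg _).trans (hsum s hs).2)
  have hBs : Summable fun m => (∫ s in 0..t, |α m s| ^ p) ^ 2 :=
    .of_nonneg_of_le (fun m => sq_nonneg _) hB (hD2.mul_left _)
  refine ⟨hBs, ?_⟩
  calc ∑' m, (∫ s in 0..t, |α m s| ^ p) ^ 2
      ≤ ∑' m, (M ^ (p - 2)) ^ 2 * (∫ s in 0..t, α m s ^ 2) ^ 2 :=
        hBs.tsum_le_tsum hB (hD2.mul_left _)
    _ ≤ (M ^ (p - 2)) ^ 2 * (t * M ^ 2) ^ 2 := by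
        rw [tsum_mul_left]; exact mul_le_mul_of_nonneg_left hD2le (by positivity)
    _ = t ^ 2 * M ^ (2 * p) := by
        rw [← pow_mul, mul_pow, ← pow_mul, ← mul_assoc, mul_comm _ (t ^ 2), mul_assoc, ← pow_add]
        congr 2; omega

end Potential

lemma abs_integral_G1fun_mul_pow_le {g : ℝ → ℝ} {t : ℝ} (ht : 0 ≤ t) (hg : ContinuousOn g (Icc 0 t))
    (k : ℤ) (p : ℕ) :
    |∫ s in 0..t, G1fun k (t - s) * g s ^ p|
      ≤ 8 * (t + t ^ 3) * invSqWeight k * ∫ s in 0..t, |g s| ^ p := by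
  rw [← intervalIntegral.integral_const_mul]
  refine (abs_integral_le_integral_abs ht).trans <| integral_mono_on ht
    ((((continuous_G1fun k).comp (continuous_sub_left t)).continuousOn.mul
      (hg.pow p)).intervalIntegrable_of_Icc ht).abs
    ((hg.abs.pow p).intervalIntegrable_of_Icc ht |>.const_mul _) fun s hs => ?_
  have hts : |t - s| ≤ t := abs_le.2 ⟨by linarith [hs.2], by linarith [hs.1]⟩
  rw [abs_mul, abs_pow]
  gcongr
  exact (abs_G1fun_le_mul_invSqWeight k (t - s)).trans <| by gcongr; exact invSqWeight_nonneg k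

theorem duhamel_sq_summable_and_tsum_le {α : ℤ → ℝ → ℝ} {t M : ℝ} {p : ℕ} (hp : 2 ≤ p)
    (hM : 0 ≤ M) (ht : 0 ≤ t) (hα : ∀ m, ContinuousOn (α m) (Icc 0 t))
    (hsum : ∀ s ∈ Icc 0 t, Summable (fun m => α m s ^ 2) ∧ ∑' m, α m s ^ 2 ≤ M ^ 2) :
    (∀ n, Summable fun m => |∫ s in 0..t, G1fun (n - m) (t - s) * α m s ^ p|) ∧
      Summable (fun n => (∑' m, ∫ s in 0..t, G1fun (n - m) (t - s) * α m s ^ p) ^ 2) ∧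
      ∑' n, (∑' m, ∫ s in 0..t, G1fun (n - m) (t - s) * α m s ^ p) ^ 2
        ≤ 64 * (∑' n, invSqWeight n) ^ 2 * M ^ (2 * p) * (t ^ 2 + t ^ 4) ^ 2 := by
  obtain ⟨hB, hBle⟩ := summable_sq_integral_abs_pow_and_tsum_le hp hM ht hα hsum
  have hK : 0 ≤ 8 * (t + t ^ 3) := by positivity
  obtain ⟨h1, h2, h3⟩ := young_of_abs_le (w := fun k => 8 * (t + t ^ 3) * invSqWeight k)
    (fun k => mul_nonneg hK (invSqWeight_nonneg k)) (summable_invSqWeight.mul_left _)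
    (fun m => integral_nonneg ht fun s _ => by positivity) hB
    fun n m => abs_integral_G1fun_mul_pow_le ht (hα m) (n - m) p
  refine ⟨h1, h2, h3.trans ?_⟩
  rw [tsum_mul_left]
  calc (8 * (t + t ^ 3) * ∑' k, invSqWeight k) ^ 2 * ∑' m, (∫ s in 0..t, |α m s| ^ p) ^ 2
      ≤ (8 * (t + t ^ 3) * ∑' k, invSqWeight k) ^ 2 * (t ^ 2 * M ^ (2 * p)) := by gcongr
    _ = _ := by ring

/-- potential-energy estimate for the Duhamel term: there is `C = C(p) > 0`
such that for every `T > 0`, `M > 0` and family `α` with `sup_{0≤t<T} Σ_n α_n(t)² ≤ M²`,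
the double series `Σ_m ∫₀ᵗ G₁(n-m,t-s) α_m(s)^p ds` converges absolutely and
`sup_{0≤t<T} Σ_n (Σ_m ∫₀ᵗ G₁(n-m,t-s) α_m(s)^p ds)² ≤ C M^{2p} (T²+T⁴)²`. -/
theorem duhamel_potential_energy_bound (p : ℕ) (hp : 2 ≤ p) : ∃ C : ℝ, 0 < C ∧
    ∀ T : ℝ, 0 < T → ∀ M : ℝ, 0 < M → ∀ α : ℤ → ℝ → ℝ,
      (∀ n : ℤ, ContinuousOn (α n) (Ico 0 T)) →
      (∀ t ∈ Ico (0 : ℝ) T, Summable (fun n : ℤ => (α n t) ^ 2) ∧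
        (∑' n : ℤ, (α n t) ^ 2) ≤ M ^ 2) →
      (∀ n : ℤ, ∀ t ∈ Ico (0 : ℝ) T,
        Summable (fun m : ℤ => |∫ s in (0 : ℝ)..t, G1fun (n - m) (t - s) * (α m s) ^ p|)) ∧
      ∀ t ∈ Ico (0 : ℝ) T,
        Summable (fun n : ℤ =>
          (∑' m : ℤ, ∫ s in (0 : ℝ)..t, G1fun (n - m) (t - s) * (α m s) ^ p) ^ 2) ∧
        (∑' n : ℤ,
            (∑' m : ℤ, ∫ s in (0 : ℝ)..t, G1fun (n - m) (t - s) * (α m s) ^ p) ^ 2)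
          ≤ C * M ^ (2 * p) * (T ^ 2 + T ^ 4) ^ 2 := by
  refine ⟨64 * (∑' n, invSqWeight n) ^ 2, by have := tsum_invSqWeight_pos; positivity, ?_⟩
  intro T _ M hM α hα hsum
  have htime := fun t (ht : t ∈ Ico (0 : ℝ) T) => duhamel_sq_summable_and_tsum_le hp hM.le ht.1
    (fun m => (hα m).mono (Icc_subset_Ico_right ht.2))
    (fun s hs => hsum s (Icc_subset_Ico_right ht.2 hs))
  refine ⟨fun n t ht => (htime t ht).1 n,
    fun t ht => ⟨(htime t ht).2.1, (htime t ht).2.2.trans ?_⟩⟩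
  have ht0 : 0 ≤ t := ht.1
  have htT : t ≤ T := ht.2.le
  gcongr
end

section
/- Let χ > 0, T > 0, and let α = (α_n)_{n∈ℤ} be a family of C² real functions on [0,T) with finite energy solving the sine-Gordon lattice equation α̈_n(t) = Δα_n(t) + χ·Δ(sin α_n(t)) for all n ∈ ℤ and t ∈ [0,T). Define E(t) = Σ_{n∈ℤ} [ (1/2)(Σ_{m≤n−1} α̇_m(t))² + (1/2)α_n(t)² + χ·(1 − cos α_n(t)) ]. Assume that the series defining E(t) converges for each t ∈ [0,T), and that this series as well as the series of its term-wise time derivatives converge locally uniformly on [0,T). Then E(t) = E(0) for all t ∈ [0,T). -/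
open Set Filter

/-!
With `F x = x + χ sin x` and `φ m = F (α m) - F (α (m - 1))`, the lattice equation reads
`α̈ m = φ (m + 1) - φ m`. Hence the partial sums of `S n = ∑_{m < n} α̇ m` telescope, and since
finite energy makes `φ` bounded with `φ m → 0` as `m → -∞`, dominated convergence gives
`Ṡ n = φ n`. Consequently `ė n = J n - J (n - 1)` for the flux `J n = F (α n) * S (n + 1)`,
which is summable (a product of two `ℓ²` sequences), so `∑ ė n = 0`; the locally uniform
convergence lets one differentiate `E = ∑ e n` term by term, and `E` is constant.
-/

open MeasureTheory intervalIntegral Topology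

section OrdConnected

variable {I : Set ℝ} [I.OrdConnected]

theorem ContinuousOn.hasDerivWithinAt_integral {g : ℝ → ℝ} (hg : ContinuousOn g I) {t₀ : ℝ}
    (ht₀ : t₀ ∈ I) : HasDerivWithinAt (fun u => ∫ x in t₀..u, g x) (g t₀) I t₀ := by
  refine .of_isLittleO (Asymptotics.isLittleO_iff.2 fun ε hε => ?_)
  obtain ⟨δ, hδ, hclose⟩ :=
    Metric.mem_nhdsWithin_iff.1 (hg t₀ ht₀ (Metric.closedBall_mem_nhds _ hε))
  filter_upwards [inter_mem_nhdsWithin I (Metric.ball_mem_nhds t₀ hδ)] with u ⟨huI, huδ⟩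
  have hsub : uIcc t₀ u ⊆ Metric.ball t₀ δ ∩ I :=
    subset_inter ((convex_ball t₀ δ).ordConnected.uIcc_subset (Metric.mem_ball_self hδ) huδ)
      (OrdConnected.uIcc_subset ‹_› ht₀ huI)
  have hint : IntervalIntegrable g volume t₀ u :=
    (hg.mono fun x hx => (hsub hx).2).intervalIntegrable
  have hlin : (u - t₀) • g t₀ = ∫ _ in t₀..u, g t₀ := by simp
  rw [integral_same, sub_zero, hlin, ← integral_sub hint intervalIntegrable_const,
    Real.norm_eq_abs (u - t₀)]
  exact norm_integral_le_of_norm_le_const fun x hx =>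
    mem_closedBall_iff_norm.1 (hclose (hsub (uIoc_subset_uIcc hx)))

theorem integral_eq_sub_of_hasDerivWithinAt_of_ordConnected {f f' : ℝ → ℝ}
    (hf : ∀ t ∈ I, HasDerivWithinAt f (f' t) I t) (hf' : ContinuousOn f' I) {a b : ℝ}
    (ha : a ∈ I) (hb : b ∈ I) : ∫ x in a..b, f' x = f b - f a := by
  have hab : uIcc a b ⊆ I := OrdConnected.uIcc_subset ‹_› ha hb
  refine integral_eq_sub_of_hasDeriv_right
    (fun t ht => (hf t (hab ht)).continuousWithinAt.mono hab) (fun t ht => ?_)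
    ((hf'.mono hab).intervalIntegrable)
  exact (hf t (hab (Ioo_subset_Icc_self ht))).mono_of_mem_nhdsWithin <| mem_of_superset
    (Ioo_mem_nhdsGT ht.2) ((Ioo_subset_Ioo_left ht.1.le).trans (Ioo_subset_Icc_self.trans hab))

variable {v d : ℕ → ℝ → ℝ}

/-- The partial sums of `∑ v k` have derivative `d 0 - d N`; the bound on `d` and dominated
convergence make `∫ d N → 0`. -/
theorem tsum_sub_tsum_eq_integral_of_hasDerivWithinAt_sub_succ
    (hv : ∀ k, ∀ t ∈ I, HasDerivWithinAt (v k) (d k t - d (k + 1) t) I t)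
    (hd : ∀ k, ContinuousOn (d k) I) {C : ℝ} (hC : ∀ k, ∀ t ∈ I, |d k t| ≤ C)
    (hlim : ∀ t ∈ I, Tendsto (fun k => d k t) atTop (𝓝 0))
    (hsum : ∀ t ∈ I, Summable fun k => v k t) {a b : ℝ} (ha : a ∈ I) (hb : b ∈ I) :
    ∑' k, v k b - ∑' k, v k a = ∫ x in a..b, d 0 x := by
  have hab : uIoc a b ⊆ I := uIoc_subset_uIcc.trans (OrdConnected.uIcc_subset ‹_› ha hb)
  have hpartial : ∀ N, ∑ k ∈ Finset.range N, (v k b - v k a) = ∫ x in a..b, (d 0 x - d N x) := by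
    intro N
    have hderiv : ∀ t ∈ I, HasDerivWithinAt (fun t => ∑ k ∈ Finset.range N, v k t)
        (d 0 t - d N t) I t := fun t ht => by
      rw [← Finset.sum_range_sub' (fun k => d k t)]
      exact HasDerivWithinAt.fun_sum fun k _ => hv k t ht
    rw [Finset.sum_sub_distrib,
      integral_eq_sub_of_hasDerivWithinAt_of_ordConnected hderiv ((hd 0).sub (hd N)) ha hb]
  have hlimit : Tendsto (fun N => ∫ x in a..b, (d 0 x - d N x)) atTop (𝓝 (∫ x in a..b, d 0 x)) := by
    simpa using tendsto_integral_filter_of_dominated_convergence (fun _ => C + C)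
      (Eventually.of_forall fun N =>
        (((hd 0).sub (hd N)).mono hab).aestronglyMeasurable measurableSet_uIoc)
      (Eventually.of_forall fun N => ae_of_all _ fun x hx =>
        (abs_sub _ _).trans (add_le_add (hC 0 x (hab hx)) (hC N x (hab hx))))
      intervalIntegrable_const
      (ae_of_all _ fun x hx => (tendsto_const_nhds (x := d 0 x)).sub (hlim x (hab hx)))
  refine tendsto_nhds_unique ?_ hlimit
  simp_rw [← hpartial, Finset.sum_sub_distrib]
  exact ((hsum b hb).hasSum.tendsto_sum_nat).sub (hsum a ha).hasSum.tendsto_sum_nat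

theorem hasDerivWithinAt_tsum_of_hasDerivWithinAt_sub_succ
    (hv : ∀ k, ∀ t ∈ I, HasDerivWithinAt (v k) (d k t - d (k + 1) t) I t)
    (hd : ∀ k, ContinuousOn (d k) I) {C : ℝ} (hC : ∀ k, ∀ t ∈ I, |d k t| ≤ C)
    (hlim : ∀ t ∈ I, Tendsto (fun k => d k t) atTop (𝓝 0))
    (hsum : ∀ t ∈ I, Summable fun k => v k t) {t₀ : ℝ} (ht₀ : t₀ ∈ I) :
    HasDerivWithinAt (fun t => ∑' k, v k t) (d 0 t₀) I t₀ := by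
  refine (((hd 0).hasDerivWithinAt_integral ht₀).const_add (∑' k, v k t₀)).congr
    (fun t ht => ?_) (by simp)
  rw [← tsum_sub_tsum_eq_integral_of_hasDerivWithinAt_sub_succ hv hd hC hlim hsum ht₀ ht]
  ring

end OrdConnected

theorem tsum_sub_sub_one_eq_zero {G : Type*} [AddCommGroup G] [TopologicalSpace G]
    [IsTopologicalAddGroup G] [T2Space G] {P : ℤ → G} (hP : Summable P) :
    ∑' n, (P n - P (n - 1)) = 0 := by
  have hshift : Summable fun n => P (n - 1) := (Equiv.subRight 1).summable_iff.2 hP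
  rw [hP.tsum_sub hshift, ← (Equiv.subRight (1 : ℤ)).tsum_eq P]
  exact sub_self _

theorem Summable.mul_of_summable_sq {ι : Type*} {f g : ι → ℝ} (hf : Summable fun i => f i ^ 2)
    (hg : Summable fun i => g i ^ 2) : Summable fun i => f i * g i :=
  .of_norm_bounded (hf.add hg) fun i => by
    rw [norm_mul, Real.norm_eq_abs, Real.norm_eq_abs, ← sq_abs (f i), ← sq_abs (g i)]
    nlinarith [two_mul_le_add_sq |f i| |g i|, abs_nonneg (f i), abs_nonneg (g i)]

theorem eq_of_continuousOn_Ico_of_hasDerivAt_zero {f : ℝ → ℝ} {a b : ℝ}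
    (hf : ContinuousOn f (Ico a b)) (hf' : ∀ x ∈ Ioo a b, HasDerivAt f 0 x) {t : ℝ}
    (ht : t ∈ Ico a b) : f t = f a := by
  rcases ht.1.eq_or_lt with rfl | hat
  · rfl
  obtain ⟨c, -, hc⟩ := exists_hasDerivAt_eq_slope f (fun _ => 0) hat
    (hf.mono (Icc_subset_Ico_right ht.2)) fun x hx => hf' x ⟨hx.1, hx.2.trans ht.2⟩
  rw [eq_comm, div_eq_zero_iff, sub_eq_zero] at hc
  exact hc.resolve_right (sub_ne_zero.2 hat.ne')

def natEquivIntLe (n : ℤ) : ℕ ≃ {m : ℤ // m ≤ n - 1} where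
  toFun k := ⟨n - 1 - k, by omega⟩
  invFun m := (n - 1 - m.1).toNat
  left_inv k := by simp
  right_inv m := by ext; have := m.2; simp; omega

theorem tailSum_eq_tsum_nat (f : ℤ → ℝ) (n : ℤ) : tailSum f n = ∑' k : ℕ, f (n - 1 - k) :=
  ((natEquivIntLe n).tsum_eq fun m => f m.1).symm

theorem tailSummable_iff_summable_nat (f : ℤ → ℝ) (n : ℤ) :
    TailSummable f n ↔ Summable fun k : ℕ => f (n - 1 - k) :=
  ((natEquivIntLe n).summable_iff (f := fun m : {m : ℤ // m ≤ n - 1} => f m.1)).symm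

theorem tailSum_add_one {f : ℤ → ℝ} {n : ℤ} (h : TailSummable f (n + 1)) :
    tailSum f (n + 1) = f n + tailSum f n := by
  rw [tailSummable_iff_summable_nat, add_sub_cancel_right] at h
  rw [tailSum_eq_tsum_nat, tailSum_eq_tsum_nat, add_sub_cancel_right, h.tsum_eq_zero_add]
  simp only [Nat.cast_zero, sub_zero, Nat.cast_succ, sub_add_eq_sub_sub_swap]

/-- `sgForce χ = V'` for the on-site potential `V x = x ^ 2 / 2 + χ * (1 - cos x)` of the
energy, so that the lattice equation reads `α̈ = Δ (sgForce χ ∘ α)`. -/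
noncomputable def sgForce (χ x : ℝ) : ℝ := x + χ * Real.sin x

theorem continuous_sgForce (χ : ℝ) : Continuous (sgForce χ) :=
  continuous_id.add (continuous_const.mul Real.continuous_sin)

theorem abs_sgForce_le (χ x : ℝ) : |sgForce χ x| ≤ (1 + |χ|) * |x| :=
  calc |sgForce χ x| ≤ |x| + |χ| * |Real.sin x| := (abs_add_le _ _).trans_eq (by rw [abs_mul])
    _ ≤ (1 + |χ|) * |x| := by nlinarith [Real.abs_sin_le_abs (x := x), abs_nonneg χ]

theorem lap_add_mul_lap_sin (χ : ℝ) (a : ℤ → ℝ) (m : ℤ) :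
    lap a m + χ * lap (fun m => Real.sin (a m)) m
      = (sgForce χ (a (m + 1)) - sgForce χ (a m)) - (sgForce χ (a m) - sgForce χ (a (m - 1))) := by
  simp only [lap, sgForce]
  ring

theorem HasDerivWithinAt.sgEnergy {a s : ℝ → ℝ} {a' b χ t : ℝ} {I : Set ℝ}
    (ha : HasDerivWithinAt a a' I t) (hs : HasDerivWithinAt s (sgForce χ (a t) - sgForce χ b) I t) :
    HasDerivWithinAt (fun τ => 1 / 2 * s τ ^ 2 + 1 / 2 * a τ ^ 2 + χ * (1 - Real.cos (a τ)))
      (sgForce χ (a t) * (a' + s t) - sgForce χ b * s t) I t := by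
  refine ((((hs.pow 2).const_mul (1 / 2)).add ((ha.pow 2).const_mul (1 / 2))).add
    ((ha.cos.const_sub 1).const_mul χ)).congr_deriv ?_
  simp only [sgForce]
  push_cast
  ring

noncomputable def sgEnergyDensity (χ : ℝ) (α : ℤ → ℝ → ℝ) (s : Set ℝ) (n : ℤ) (t : ℝ) : ℝ :=
  (1 / 2) * (tailSum (fun m => derivWithin (α m) s t) n) ^ 2
    + (1 / 2) * (α n t) ^ 2 + χ * (1 - Real.cos (α n t))

noncomputable def sgEnergyFlux (χ : ℝ) (α : ℤ → ℝ → ℝ) (s : Set ℝ) (n : ℤ) (t : ℝ) : ℝ :=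
  sgForce χ (α n t) * tailSum (fun m => derivWithin (α m) s t) (n + 1)

section SineGordon

variable {χ T : ℝ} {α : ℤ → ℝ → ℝ}

theorem SolvesSG.hasDerivWithinAt_tailSum (hC2 : ∀ n, ContDiffOn ℝ 2 (α n) (Ico 0 T))
    (hE : FiniteEnergyOn α (Ico 0 T) T) (hsol : SolvesSG χ α (Ico 0 T)) (n : ℤ) {t : ℝ}
    (ht : t ∈ Ico 0 T) :
    HasDerivWithinAt (fun τ => tailSum (fun m => derivWithin (α m) (Ico 0 T) τ) n)
      (sgForce χ (α n t) - sgForce χ (α (n - 1) t)) (Ico 0 T) t := by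
  obtain ⟨htail, M, hM⟩ := hE
  have hα : ∀ m, ContinuousOn (α m) (Ico 0 T) := fun m => (hC2 m).continuousOn
  have hα' : ∀ m, DifferentiableOn ℝ (derivWithin (α m) (Ico 0 T)) (Ico 0 T) := fun m =>
    ((hC2 m).derivWithin (uniqueDiffOn_Ico 0 T) (m := 1) (by norm_num)).differentiableOn
      (by norm_num)
  have hbound : ∀ m, ∀ τ ∈ Ico 0 T, |α m τ| ≤ √M := fun m τ hτ => Real.abs_le_sqrt <| by
    obtain ⟨-, hα2, hle⟩ := hM τ hτ
    have hS : 0 ≤ ∑' j : ℤ, tailSum (fun m => derivWithin (α m) (Ico 0 T) τ) j ^ 2 :=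
      tsum_nonneg fun j => sq_nonneg _
    linarith [hα2.le_tsum m fun j _ => sq_nonneg (α j τ)]
  have hdecay : ∀ τ ∈ Ico 0 T, Tendsto (fun m => sgForce χ (α m τ)) cofinite (𝓝 0) := by
    intro τ hτ
    have hα0 : Tendsto (fun m => α m τ) cofinite (𝓝 0) := by
      have hsqrt := (hM τ hτ).2.1.tendsto_cofinite_zero.sqrt
      simp only [Real.sqrt_sq_eq_abs, Real.sqrt_zero] at hsqrt
      exact (tendsto_zero_iff_abs_tendsto_zero _).2 hsqrt
    have hF := ((continuous_sgForce χ).tendsto 0).comp hα0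
    rwa [show sgForce χ 0 = 0 by simp [sgForce]] at hF
  -- `α̈ (n - 1 - k) = d k - d (k + 1)` with `d k = φ (n - k)`
  have key := hasDerivWithinAt_tsum_of_hasDerivWithinAt_sub_succ
    (v := fun k => derivWithin (α (n - 1 - k)) (Ico 0 T))
    (d := fun k τ => sgForce χ (α (n - k) τ) - sgForce χ (α (n - 1 - k) τ))
    (C := 2 * ((1 + |χ|) * √M)) ?hv ?hd ?hC ?hlim ?hsum ht
  · simpa [tailSum_eq_tsum_nat] using key
  case hv =>
    intro k τ hτ
    have := (hα' (n - 1 - k) τ hτ).hasDerivWithinAt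
    rw [hsol _ τ hτ, lap_add_mul_lap_sin] at this
    have h1 : n - 1 - (k : ℤ) + 1 = n - k := by ring
    have h2 : n - 1 - (k : ℤ) - 1 = n - 1 - ((k + 1 : ℕ) : ℤ) := by push_cast; ring
    have h3 : n - ((k + 1 : ℕ) : ℤ) = n - 1 - k := by push_cast; ring
    rw [h1, h2] at this
    rwa [h3]
  case hd =>
    exact fun k => ((continuous_sgForce χ).comp_continuousOn (hα _)).sub
      ((continuous_sgForce χ).comp_continuousOn (hα _))
  case hC =>
    intro k τ hτ
    have hF : ∀ m, |sgForce χ (α m τ)| ≤ (1 + |χ|) * √M := fun m =>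
      (abs_sgForce_le χ _).trans (mul_le_mul_of_nonneg_left (hbound m τ hτ) (by positivity))
    linarith [abs_sub (sgForce χ (α (n - k) τ)) (sgForce χ (α (n - 1 - k) τ)), hF (n - k),
      hF (n - 1 - k)]
  case hlim =>
    intro τ hτ
    have hinj : ∀ c : ℤ, Tendsto (fun k : ℕ => c - k) atTop cofinite := fun c => by
      rw [← Nat.cofinite_eq_atTop]
      exact Function.Injective.tendsto_cofinite fun k l h => by simpa using h
    simpa using ((hdecay τ hτ).comp (hinj n)).sub ((hdecay τ hτ).comp (hinj (n - 1)))
  case hsum =>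
    exact fun τ hτ =>
      (tailSummable_iff_summable_nat (fun m => derivWithin (α m) (Ico 0 T) τ) n).1 (htail n τ hτ)


theorem SolvesSG.hasDerivWithinAt_sgEnergyDensity (hC2 : ∀ n, ContDiffOn ℝ 2 (α n) (Ico 0 T))
    (hE : FiniteEnergyOn α (Ico 0 T) T) (hsol : SolvesSG χ α (Ico 0 T)) (n : ℤ) {t : ℝ}
    (ht : t ∈ Ico 0 T) :
    HasDerivWithinAt (sgEnergyDensity χ α (Ico 0 T) n)
      (sgEnergyFlux χ α (Ico 0 T) n t - sgEnergyFlux χ α (Ico 0 T) (n - 1) t) (Ico 0 T) t := by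
  have := (((hC2 n).differentiableOn (by norm_num)) t ht).hasDerivWithinAt.sgEnergy
    (hsol.hasDerivWithinAt_tailSum hC2 hE n ht)
  rw [← tailSum_add_one (hE.1 (n + 1) t ht)] at this
  rw [sgEnergyFlux, sgEnergyFlux, sub_add_cancel]
  exact this

theorem FiniteEnergyOn.summable_sgEnergyFlux (hE : FiniteEnergyOn α (Ico 0 T) T) (χ : ℝ) {t : ℝ}
    (ht : t ∈ Ico 0 T) : Summable fun n => sgEnergyFlux χ α (Ico 0 T) n t := by
  obtain ⟨M, hM⟩ := hE.2
  obtain ⟨hS, hα2, -⟩ := hM t ht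
  have hS' : Summable fun n => tailSum (fun m => derivWithin (α m) (Ico 0 T) t) (n + 1) ^ 2 :=
    hS.comp_injective (add_left_injective 1)
  have hprod := (hα2.mul_of_summable_sq hS').abs.mul_left (1 + |χ|)
  refine .of_norm_bounded hprod fun n => ?_
  rw [sgEnergyFlux, Real.norm_eq_abs, abs_mul, abs_mul, ← mul_assoc]
  exact mul_le_mul_of_nonneg_right (abs_sgForce_le χ _) (abs_nonneg _)

end SineGordon

theorem sine_gordon_energy_conservation_general (χ T : ℝ)
    (α : ℤ → ℝ → ℝ)
    (hC2 : ∀ n : ℤ, ContDiffOn ℝ 2 (α n) (Ico 0 T))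
    (hE : FiniteEnergyOn α (Ico 0 T) T)
    (hsol : SolvesSG χ α (Ico 0 T))
    (e : ℤ → ℝ → ℝ)
    (he : ∀ (n : ℤ) (t : ℝ),
      e n t = (1 / 2) * (tailSum (fun m => derivWithin (α m) (Ico 0 T) t) n) ^ 2
        + (1 / 2) * (α n t) ^ 2 + χ * (1 - Real.cos (α n t)))
    (hu1 : TendstoLocallyUniformlyOn (fun (s : Finset ℤ) (t : ℝ) => ∑ n ∈ s, e n t)
      (fun t => ∑' n : ℤ, e n t) atTop (Ico 0 T))
    (hu2 : TendstoLocallyUniformlyOn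
      (fun (s : Finset ℤ) (t : ℝ) => ∑ n ∈ s, derivWithin (e n) (Ico 0 T) t)
      (fun t => ∑' n : ℤ, derivWithin (e n) (Ico 0 T) t) atTop (Ico 0 T)) :
    ∀ t ∈ Ico (0 : ℝ) T, (∑' n : ℤ, e n t) = ∑' n : ℤ, e n 0 := by
  obtain rfl : e = sgEnergyDensity χ α (Ico 0 T) := funext fun n => funext (he n)
  have hderiv := fun n t (ht : t ∈ Ico 0 T) => hsol.hasDerivWithinAt_sgEnergyDensity hC2 hE n ht
  have hcont : ContinuousOn (fun t => ∑' n, sgEnergyDensity χ α (Ico 0 T) n t) (Ico 0 T) :=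
    hu1.continuousOn <| Frequently.of_forall fun s => continuousOn_finsetSum s fun n _ t ht =>
      (hderiv n t ht).continuousWithinAt
  have hzero : ∀ t ∈ Ioo 0 T,
      HasDerivAt (fun t => ∑' n, sgEnergyDensity χ α (Ico 0 T) n t) 0 t := by
    intro t ht
    have hIco := Ioo_subset_Ico_self ht
    have h := hasDerivAt_of_tendstoLocallyUniformlyOn isOpen_Ioo (hu2.mono Ioo_subset_Ico_self)
      (Eventually.of_forall fun s y hy => HasDerivAt.fun_sum fun n _ =>
        (hderiv n y (Ioo_subset_Ico_self hy)).differentiableWithinAt.hasDerivWithinAt.hasDerivAt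
          (Ico_mem_nhds hy.1 hy.2))
      (fun y hy => hu1.tendsto_at (Ioo_subset_Ico_self hy)) ht
    rwa [tsum_congr fun n => (hderiv n t hIco).derivWithin (uniqueDiffOn_Ico 0 T t hIco),
      tsum_sub_sub_one_eq_zero (hE.summable_sgEnergyFlux χ hIco)] at h
  exact fun t ht => eq_of_continuousOn_Ico_of_hasDerivAt_zero hcont hzero ht

/-- conservation of the energy
`E(t) = Σ_n [ ½(Σ_{m≤n-1} α̇_m)² + ½α_n² + χ(1 - cos α_n) ]`
for a finite-energy solution of the sine-Gordon lattice, assuming the series defining `E`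
as well as the series of its term-wise time derivatives converge locally uniformly. -/
theorem sine_gordon_energy_conservation (χ T : ℝ) (hχ : 0 < χ) (hT : 0 < T)
    (α : ℤ → ℝ → ℝ)
    (hC2 : ∀ n : ℤ, ContDiffOn ℝ 2 (α n) (Ico 0 T))
    (hE : FiniteEnergyOn α (Ico 0 T) T)
    (hsol : SolvesSG χ α (Ico 0 T))
    (e : ℤ → ℝ → ℝ)
    (he : ∀ (n : ℤ) (t : ℝ),
      e n t = (1 / 2) * (tailSum (fun m => derivWithin (α m) (Ico 0 T) t) n) ^ 2
        + (1 / 2) * (α n t) ^ 2 + χ * (1 - Real.cos (α n t)))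
    (hconv : ∀ t ∈ Ico (0 : ℝ) T, Summable (fun n : ℤ => e n t))
    (hdiff : ∀ n : ℤ, DifferentiableOn ℝ (e n) (Ico 0 T))
    (hu1 : TendstoLocallyUniformlyOn (fun (s : Finset ℤ) (t : ℝ) => ∑ n ∈ s, e n t)
      (fun t => ∑' n : ℤ, e n t) atTop (Ico 0 T))
    (hu2 : TendstoLocallyUniformlyOn
      (fun (s : Finset ℤ) (t : ℝ) => ∑ n ∈ s, derivWithin (e n) (Ico 0 T) t)
      (fun t => ∑' n : ℤ, derivWithin (e n) (Ico 0 T) t) atTop (Ico 0 T)) :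
    ∀ t ∈ Ico (0 : ℝ) T, (∑' n : ℤ, e n t) = ∑' n : ℤ, e n 0 :=
  sine_gordon_energy_conservation_general χ T α hC2 hE hsol e he hu1 hu2
end
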